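/- arXiv:1707.07133 — 2 statements merged into one kernel-verified Lean document; each statement's English description precedes it below -/
import Mathlib

section
/- Let p be prime, n ≥ 1, and let b₀ < b₁ < … < b_{n-1} be the lower ramification jumps of a totally ramified ℤ/p^n-extension of local fields of residue characteristic p (so all b_l are coprime to p and pairwise congruent mod p). For 0 ≤ t ≤ p^n - 1 write t = ∑_{l=1}^{n} a_{l,t} p^{l-1} with 0 ≤ a_{l,t} ≤ p-1, and set d_t = ⌊( ∑_{l=1}^{n} p^{n-l}(p - 1 + (p-1-a_{l,t})·b_{l-1}) ) / p^n⌋. Then d_t ≥ 1 for 0 ≤ t < p^n - 1, and d_{p^n-1} = 0. -/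
/-!
Split the numerator of `d t` as `(p ^ n - 1) + S t` with
`S t = ∑ p ^ (n - 1 - l) * (p - 1 - a_l(t)) * b_l`, using `∑ p ^ (n - 1 - l) * (p - 1) = p ^ n - 1`.
Since every `b_l ≥ 1`, `S t` vanishes exactly when all base-`p` digits `a_l(t)` equal `p - 1`, i.e.
when `t = p ^ n - 1`; so `d t = ⌊(p ^ n - 1 + S t) / p ^ n⌋` is `0` there and `≥ 1` for smaller `t`.
-/

open Finset

namespace Nat

variable {p : ℕ}

theorem sum_range_pow_mul_digit (t n : ℕ) :
    ∑ i ∈ range n, p ^ i * (t / p ^ i % p) = t % p ^ n := by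
  induction n with
  | zero => simp [Nat.mod_one]
  | succ n ih => rw [sum_range_succ, ih, Nat.mod_pow_succ]

theorem sum_range_pow_mul_pred (hp : 0 < p) (n : ℕ) :
    ∑ i ∈ range n, p ^ i * (p - 1) = p ^ n - 1 := by
  rw [← sum_mul, geom_sum_mul_of_one_le hp]

theorem sum_fin_pow_rev_mul_pred (hp : 0 < p) (n : ℕ) :
    ∑ l : Fin n, p ^ (n - 1 - (l : ℕ)) * (p - 1) = p ^ n - 1 := by
  rw [Fin.sum_univ_eq_sum_range (fun l => p ^ (n - 1 - l) * (p - 1)), ← sum_range_reflect,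
    ← sum_range_pow_mul_pred hp]
  refine sum_congr rfl fun i hi => ?_
  rw [mem_range] at hi
  congr 2
  omega

theorem forall_digit_eq_pred_iff (hp : 0 < p) {t n : ℕ} (ht : t < p ^ n) :
    (∀ l < n, t / p ^ l % p = p - 1) ↔ t = p ^ n - 1 := by
  have hdigit_le : ∀ i ∈ range n, p ^ i * (t / p ^ i % p) ≤ p ^ i * (p - 1) :=
    fun i _ => Nat.mul_le_mul_left _ (Nat.le_sub_one_of_lt (Nat.mod_lt _ hp))
  have ht_sum : t = ∑ i ∈ range n, p ^ i * (t / p ^ i % p) := by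
    rw [sum_range_pow_mul_digit, Nat.mod_eq_of_lt ht]
  rw [← sum_range_pow_mul_pred hp]
  conv_rhs => rw [ht_sum, sum_eq_sum_iff_of_le hdigit_le]
  simp only [mem_range, Nat.mul_right_inj (pow_pos hp _).ne']

theorem sum_fin_pow_rev_mul_sub_digit_eq_zero_iff (hp : 0 < p) {n t : ℕ} (ht : t < p ^ n)
    {b : Fin n → ℕ} (hb : ∀ l, 1 ≤ b l) :
    ∑ l : Fin n, p ^ (n - 1 - (l : ℕ)) * ((p - 1 - t / p ^ (l : ℕ) % p) * b l) = 0 ↔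
      t = p ^ n - 1 := by
  have hdigit_le : ∀ l : ℕ, t / p ^ l % p ≤ p - 1 :=
    fun l => Nat.le_sub_one_of_lt (Nat.mod_lt _ hp)
  rw [← forall_digit_eq_pred_iff hp ht, sum_eq_zero_iff, Fin.forall_iff]
  simp only [mem_univ, true_implies, mul_eq_zero, pow_eq_zero_iff', hp.ne', false_and,
    false_or, Nat.sub_eq_zero_iff_le]
  refine forall₂_congr fun l hl => ?_
  have := hb ⟨l, hl⟩
  have := hdigit_le l
  omega

end Nat

theorem stmt_8_general (p n : ℕ) (hp : p.Prime)
    (b : Fin n → ℕ) (hb1 : ∀ l, 1 ≤ b l) :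
    let d : ℕ → ℕ := fun t =>
      (∑ l : Fin n, p ^ (n - 1 - (l : ℕ)) *
        ((p - 1) + (p - 1 - t / p ^ (l : ℕ) % p) * b l)) / p ^ n
    (∀ t, t < p ^ n - 1 → 1 ≤ d t) ∧ d (p ^ n - 1) = 0 := by
  intro d
  set S : ℕ → ℕ := fun t =>
    ∑ l : Fin n, p ^ (n - 1 - (l : ℕ)) * ((p - 1 - t / p ^ (l : ℕ) % p) * b l)
  have hd : ∀ t, d t = (p ^ n - 1 + S t) / p ^ n := fun t => by
    simp only [d, S, mul_add, sum_add_distrib, Nat.sum_fin_pow_rev_mul_pred hp.pos]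
  have hpn : 0 < p ^ n := pow_pos hp.pos n
  refine ⟨fun t ht => ?_, ?_⟩
  · have hSt : S t ≠ 0 := fun h =>
      absurd ((Nat.sum_fin_pow_rev_mul_sub_digit_eq_zero_iff hp.pos (by omega) hb1).1 h) (by omega)
    rw [hd, Nat.one_le_div_iff hpn]
    omega
  · have hS_max : S (p ^ n - 1) = 0 :=
      (Nat.sum_fin_pow_rev_mul_sub_digit_eq_zero_iff hp.pos (by omega) hb1).2 rfl
    rw [hd, hS_max, add_zero]
    exact Nat.div_eq_of_lt (by omega)

/-- Arithmetic content of Proposition 3.1(ii): for a prime `p`, `n ≥ 1`, and lower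
ramification jumps `b₀,…,b_{n-1} ≥ 1` coprime to `p`, the quantities
`d_t = ⌊(∑_{l=1}^n p^{n-l}(p-1+(p-1-a_{l,t}) b_{l-1}))/p^n⌋`, where `(a_{l,t})` are the
base-`p` digits of `t`, satisfy `d_t ≥ 1` for `0 ≤ t < p^n - 1` and `d_{p^n-1} = 0`. -/
theorem stmt_8 (p n : ℕ) (hp : p.Prime) (hn : 1 ≤ n)
    (b : Fin n → ℕ) (hb1 : ∀ l, 1 ≤ b l) (hbp : ∀ l, Nat.Coprime (b l) p) :
    let d : ℕ → ℕ := fun t =>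
      (∑ l : Fin n, p ^ (n - 1 - (l : ℕ)) *
        ((p - 1) + (p - 1 - t / p ^ (l : ℕ) % p) * b l)) / p ^ n
    (∀ t, t < p ^ n - 1 → 1 ≤ d t) ∧ d (p ^ n - 1) = 0 :=
  stmt_8_general p n hp b hb1
end

section
/- With notation as in the jump formula: for p prime, n ≥ 1, jumps b₀,…,b_{n-1} ≥ 1 coprime to p, and 0 ≤ s < t ≤ p^n - 1 with base-p digit expansions (a_{l,s}), (a_{l,t}), the integers e_s = ∑_{l=1}^{n} a_{l,s}·p^{n-l}·b_{l-1} are pairwise incongruent modulo p^n when the b_l are pairwise congruent mod p and coprime to p; i.e., s ↦ (∑_l a_{l,s} p^{n-l} b_{l-1} mod p^n) is injective on {0,…,p^n-1}. -/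
/-!
The weight of the `l`-th digit is `p ^ (n - 1 - l)` times a unit modulo `p`, so the congruence
is triangular: modulo `p ^ (n - 1)` only the digits with `l ≥ 1` survive, and once these agree
the remaining congruence `p ^ (n - 1) * c₀ * b₀ ≡ p ^ (n - 1) * d₀ * b₀ [MOD p ^ n]` forces
`c₀ = d₀` because `b₀` is invertible modulo `p`. Hence `s` and `t` have the same `n` digits.
-/

namespace Nat

theorem mod_pow_eq_of_forall_digit_eq {p s t : ℕ} :
    ∀ {n : ℕ}, (∀ l < n, s / p ^ l % p = t / p ^ l % p) → s % p ^ n = t % p ^ n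
  | 0, _ => by simp only [pow_zero, mod_one]
  | n + 1, h => by
    rw [mod_pow_succ, mod_pow_succ, mod_pow_eq_of_forall_digit_eq fun l hl => h l (by omega),
      h n n.lt_succ_self]

theorem eq_of_sum_mul_pow_mul_modEq {p : ℕ} :
    ∀ {n : ℕ} {b c d : Fin n → ℕ}, (∀ l, (b l).Coprime p) → (∀ l, c l < p) → (∀ l, d l < p) →
      (∑ l, c l * p ^ (n - 1 - l) * b l) ≡ (∑ l, d l * p ^ (n - 1 - l) * b l) [MOD p ^ n] →
      c = d
  | 0, _, _, _, _, _, _, _ => funext fun l => l.elim0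
  | n + 1, b, c, d, hb, hc, hd, h => by
    have split : ∀ e : Fin (n + 1) → ℕ, ∑ l, e l * p ^ (n + 1 - 1 - l) * b l =
        p ^ n * (e 0 * b 0) + ∑ l : Fin n, e l.succ * p ^ (n - 1 - l) * b l.succ := by
      intro e
      simp only [Fin.sum_univ_succ, Fin.val_zero, Fin.val_succ]
      congr 1
      · rw [Nat.add_sub_cancel, Nat.sub_zero]; ring
      · exact Finset.sum_congr rfl fun l _ => by rw [show n + 1 - 1 - (l + 1) = n - 1 - l by omega]
    rw [split c, split d, pow_succ] at h
    have htail : ∀ l : Fin n, c l.succ = d l.succ := by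
      have hlead : p ^ n * (c 0 * b 0) ≡ p ^ n * (d 0 * b 0) [MOD p ^ n] :=
        (mul_mod_right _ _).trans (mul_mod_right _ _).symm
      exact congrFun (eq_of_sum_mul_pow_mul_modEq (fun _ => hb _) (fun _ => hc _) (fun _ => hd _)
        (hlead.add_left_cancel (h.of_mul_right p)))
    have hhead : c 0 = d 0 := by
      have hp : p ^ n ≠ 0 := pow_ne_zero n (zero_lt_of_lt (hc 0)).ne'
      simp only [htail] at h
      have hmul : c 0 * b 0 ≡ d 0 * b 0 [MOD p] := (h.add_right_cancel' _).mul_left_cancel' hp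
      exact (hmul.cancel_right_of_coprime (hb 0).symm).eq_of_lt_of_lt (hc 0) (hd 0)
    funext l
    cases l using Fin.cases with
    | zero => exact hhead
    | succ l => exact htail l

end Nat

theorem stmt_9_general (p n : ℕ) (hp : p.Prime)
    (b : Fin n → ℕ) (hbp : ∀ l, Nat.Coprime (b l) p) :
    ∀ s t, s < p ^ n → t < p ^ n →
      (∑ l : Fin n, (s / p ^ (l : ℕ) % p) * p ^ (n - 1 - (l : ℕ)) * b l) ≡
        (∑ l : Fin n, (t / p ^ (l : ℕ) % p) * p ^ (n - 1 - (l : ℕ)) * b l) [MOD p ^ n] →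
      s = t := by
  intro s t hs ht h
  have hdigits := Nat.eq_of_sum_mul_pow_mul_modEq hbp (fun _ => Nat.mod_lt _ hp.pos)
    (fun _ => Nat.mod_lt _ hp.pos) h
  have hmod := Nat.mod_pow_eq_of_forall_digit_eq fun l hl => congrFun hdigits ⟨l, hl⟩
  rwa [Nat.mod_eq_of_lt hs, Nat.mod_eq_of_lt ht] at hmod

/-- Key injectivity step in the proof of Proposition 3.1: for a prime `p`, `n ≥ 1`, and
jumps `b₀,…,b_{n-1} ≥ 1` coprime to `p` and pairwise congruent mod `p`, the map
`s ↦ ∑_l a_{l,s} p^{n-l} b_{l-1} mod p^n` (with `(a_{l,s})` the base-`p` digits of `s`)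
is injective on `{0,…,p^n-1}`. -/
theorem stmt_9 (p n : ℕ) (hp : p.Prime) (hn : 1 ≤ n)
    (b : Fin n → ℕ) (hb1 : ∀ l, 1 ≤ b l) (hbp : ∀ l, Nat.Coprime (b l) p)
    (hcong : ∀ l l', b l % p = b l' % p) :
    ∀ s t, s < p ^ n → t < p ^ n →
      (∑ l : Fin n, (s / p ^ (l : ℕ) % p) * p ^ (n - 1 - (l : ℕ)) * b l) ≡
        (∑ l : Fin n, (t / p ^ (l : ℕ) % p) * p ^ (n - 1 - (l : ℕ)) * b l) [MOD p ^ n] →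
      s = t :=
  stmt_9_general p n hp b hbp
end
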